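/- If a group G acts on a finitely generated abelian group N with finite kernel of the action map G → Aut(N), then there is a uniform bound on the orders of finite subgroups of G. -/

import Mathlib

open Finset

set_option linter.unusedSectionVars false
namespace BFSAux

variable {ι : Type*} [Fintype ι] [DecidableEq ι]

/-- extract a pointwise divisor from a finsupp vector -/
lemma smul_extract (y : ι →₀ ℤ) (d : ℤ) (h : ∀ i, d ∣ y i) : ∃ w : ι →₀ ℤ, y = d • w := by
  refine ⟨Finsupp.mapRange (· / d) (by simp) y, ?_⟩
  ext i
  simp only [Finsupp.smul_apply, Finsupp.mapRange_apply, smul_eq_mul]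
  exact (Int.mul_ediv_cancel' (h i)).symm

lemma single_dvd_all {u : AddMonoid.End (ι →₀ ℤ)} {d : ℤ}
    (h : ∀ j i, d ∣ u (Finsupp.single j 1) i) : ∀ x i, d ∣ u x i := by
  intro x
  induction x using Finsupp.induction_linear with
  | zero => simp
  | add f g hf hg =>
      intro i
      rw [map_add]
      exact dvd_add (hf i) (hg i)
  | single a b =>
      intro i
      have : (Finsupp.single a b : ι →₀ ℤ) = b • Finsupp.single a 1 := by
        simp [Finsupp.smul_single]
      rw [this, map_zsmul]
      simp only [Finsupp.smul_apply, smul_eq_mul]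
      exact Dvd.dvd.mul_left (h a i) b

end BFSAux

namespace BFSAux2
open BFSAux
variable {ι : Type*} [Fintype ι] [DecidableEq ι]

lemma mink_prime (f : AddMonoid.End (ι →₀ ℤ)) {q : ℕ} (hq : q.Prime) (hfq : f ^ q = 1)
    (hmod : ∀ x i, (3:ℤ) ∣ (f x - x) i) : f = 1 := by
  classical
  by_contra hne
  set u : AddMonoid.End (ι →₀ ℤ) := f - 1 with hu_def
  have hu : u ≠ 0 := sub_ne_zero.mpr hne
  have huapp : ∀ x : ι →₀ ℤ, u x = f x - x := by
    intro x; rfl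
  have humod : ∀ x i, (3:ℤ) ∣ u x i := by
    intro x i; rw [huapp]; exact hmod x i
  -- find a nonzero "entry"
  have hex : ∃ j i, u (Finsupp.single j 1) i ≠ 0 := by
    by_contra hcon
    push_neg at hcon
    apply hu
    apply AddMonoidHom.ext
    intro x
    have : ∀ x i, (0:ℤ) ∣ u x i := single_dvd_all (by simpa using hcon)
    have h0 : ∀ (x : ι →₀ ℤ), u x = 0 := by
      intro x; ext i; simpa using this x i
    exact h0 x
  obtain ⟨j₀, i₀, hc⟩ := hex
  set c : ℤ := u (Finsupp.single j₀ 1) i₀ with hc_def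
  set P : ℕ → Prop := fun a => ∀ j i, (3:ℤ)^a ∣ u (Finsupp.single j 1) i with hP_def
  have hble : ∀ m, P m → m ≤ c.natAbs := by
    intro m hm
    have h1 : (3:ℤ)^m ∣ c := hm j₀ i₀
    have h2 : (3:ℕ)^m ∣ c.natAbs := by
      have := Int.natAbs_dvd_natAbs.mpr h1
      simpa [Int.natAbs_pow] using this
    have h3 : (3:ℕ)^m ≤ c.natAbs :=
      Nat.le_of_dvd (Int.natAbs_pos.mpr hc) h2
    calc m ≤ 3^m := (Nat.lt_pow_self (by norm_num : (1:ℕ) < 3)).le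
    _ ≤ c.natAbs := h3
  have hP1 : P 1 := by
    intro j i; simpa using humod (Finsupp.single j 1) i
  set a : ℕ := Nat.findGreatest P c.natAbs with ha_def
  have ha1 : 1 ≤ a := Nat.le_findGreatest (hble 1 hP1) hP1
  have hPa : P a := Nat.findGreatest_spec (m := 1) (hble 1 hP1) hP1
  have hnota : ∃ j i, ¬ (3:ℤ)^(a+1) ∣ u (Finsupp.single j 1) i := by
    by_contra hcon
    push_neg at hcon
    have hPa1 : P (a+1) := hcon
    have := Nat.le_findGreatest (hble (a+1) hPa1) hPa1
    omega
  obtain ⟨j₁, i₁, hx⟩ := hnota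
  set x₀ : ι →₀ ℤ := Finsupp.single j₁ 1 with hx0_def
  have hall : ∀ x i, (3:ℤ)^a ∣ u x i := single_dvd_all hPa
  -- powers of u
  have hpow : ∀ m x i, (3:ℤ)^(a*m) ∣ (u^m) x i := by
    intro m
    induction m with
    | zero => intro x i; simp
    | succ m ih =>
        intro x i
        obtain ⟨w, hw⟩ := smul_extract (u x) ((3:ℤ)^a) (hall x)
        have : (u^(m+1)) x = (3:ℤ)^a • (u^m) w := by
          rw [pow_succ]
          show (u^m) (u x) = (3:ℤ)^a • (u^m) w
          rw [hw, map_zsmul]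
        rw [this]
        simp only [Finsupp.smul_apply, smul_eq_mul]
        rw [Nat.mul_succ, pow_add, mul_comm ((3:ℤ)^(a*m)) _]
        exact mul_dvd_mul dvd_rfl (ih w i)
  -- the binomial identity evaluated at x₀, i₁
  have hfeq : f = u + 1 := by simp [hu_def]
  have hbin : (∑ m ∈ range (q + 1), u ^ m * ((q.choose m : ℕ) : AddMonoid.End (ι →₀ ℤ))) = 1 := by
    have h := (Commute.one_right u).add_pow q
    rw [← hfeq] at h
    rw [← hfq, h]
    congr 1
    ext m
    rw [one_pow, mul_one]
  have heval : ∑ m ∈ range (q + 1), (q.choose m : ℤ) * ((u ^ m) x₀ i₁) = x₀ i₁ := by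
    have h1 : (∑ m ∈ range (q + 1), u ^ m * ((q.choose m : ℕ) : AddMonoid.End (ι →₀ ℤ))) x₀ = x₀ := by
      rw [hbin]; rfl
    have h2 : (∑ m ∈ range (q + 1), u ^ m * ((q.choose m : ℕ) : AddMonoid.End (ι →₀ ℤ))) x₀
        = ∑ m ∈ range (q + 1), (q.choose m : ℤ) • ((u ^ m) x₀) := by
      erw [AddMonoidHom.finsetSum_apply]
      refine Finset.sum_congr rfl fun m _ => ?_
      show (u ^ m) (((q.choose m : ℕ) : AddMonoid.End (ι →₀ ℤ)) x₀) = _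
      rw [AddMonoid.End.natCast_apply, map_nsmul]
      simp
    rw [h2] at h1
    have h3 := congrArg (fun y : ι →₀ ℤ => y i₁) h1
    simpa [Finsupp.finset_sum_apply, mul_comm] using h3
  obtain ⟨t, ht⟩ : ∃ t, u x₀ i₁ = (3:ℤ)^a * t := hall x₀ i₁
  have hx3t : ¬ (3:ℤ) ∣ t := by
    intro hd
    exact hx (by rw [ht, pow_succ]; exact mul_dvd_mul dvd_rfl hd)
  obtain ⟨s, rfl⟩ : ∃ s, q = s + 2 := ⟨q - 2, by have := hq.two_le; omega⟩
  rw [Finset.sum_range_succ'] at heval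
  have hg0 : ((s+2).choose 0 : ℤ) * ((u ^ 0) x₀ i₁) = x₀ i₁ := by
    simp [AddMonoid.End.one_apply]
  rw [hg0] at heval
  have hS : ∑ m ∈ range (s+2), ((s+2).choose (m+1) : ℤ) * ((u ^ (m+1)) x₀ i₁) = 0 := by
    linarith
  rw [Finset.sum_range_succ'] at hS
  have hg1 : ((s+2).choose (0+1) : ℤ) * ((u ^ (0+1)) x₀ i₁) = ((s+2 : ℕ) : ℤ) * (u x₀ i₁) := by
    rw [Nat.choose_one_right]
    norm_num
  rw [hg1] at hS
  by_cases hq3 : s + 2 = 3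
  · -- q = 3
    have hs1 : s = 1 := by omega
    subst hs1
    rw [Finset.sum_range_succ, Finset.sum_range_one] at hS
    -- hS : choose 3 2 * u^2 + choose 3 3 * u^3 + 3 * u = 0  (at x₀ i₁)
    have hc2 : ((3:ℕ).choose (0+1+1) : ℤ) = 3 := by norm_num
    have hc3 : ((3:ℕ).choose (1+1+1) : ℤ) = 1 := by norm_num
    have hd2 : (3:ℤ)^(a+2) ∣ ((3:ℕ).choose (0+1+1) : ℤ) * ((u ^ (0+1+1)) x₀ i₁) := by
      rw [hc2]
      have h1 : (3:ℤ)^(a*(0+1+1)) ∣ (u ^ (0+1+1)) x₀ i₁ := hpow (0+1+1) x₀ i₁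
      have h2 : (3:ℤ)^(a+1) ∣ (3:ℤ)^(a*(0+1+1)) := pow_dvd_pow 3 (by omega)
      calc (3:ℤ)^(a+2) = 3 * (3:ℤ)^(a+1) := by ring
      _ ∣ 3 * ((u ^ (0+1+1)) x₀ i₁) := mul_dvd_mul dvd_rfl (h2.trans h1)
    have hd3 : (3:ℤ)^(a+2) ∣ ((3:ℕ).choose (1+1+1) : ℤ) * ((u ^ (1+1+1)) x₀ i₁) := by
      rw [hc3, one_mul]
      exact (pow_dvd_pow 3 (by omega : a+2 ≤ a*(1+1+1))).trans (hpow (1+1+1) x₀ i₁)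
    have hdu : (3:ℤ)^(a+2) ∣ ((3:ℕ):ℤ) * (u x₀ i₁) := by
      have heq : ((3:ℕ):ℤ) * (u x₀ i₁)
          = -(((3:ℕ).choose (0+1+1) : ℤ) * ((u ^ (0+1+1)) x₀ i₁)
              + ((3:ℕ).choose (1+1+1) : ℤ) * ((u ^ (1+1+1)) x₀ i₁)) := by
        push_cast at hS ⊢
        linarith
      rw [heq]
      exact (dvd_add hd2 hd3).neg_right
    rw [ht] at hdu
    have h5 : ((3:ℕ):ℤ) * ((3:ℤ)^a * t) = (3:ℤ)^(a+1) * t := by push_cast; ring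
    rw [h5] at hdu
    have h6 : (3:ℤ)^(a+2) = (3:ℤ)^(a+1) * 3 := by ring
    rw [h6] at hdu
    exact hx3t ((mul_dvd_mul_iff_left (pow_ne_zero (a+1) (by norm_num : (3:ℤ) ≠ 0))).mp hdu)
  · -- q ≠ 3
    have hsum : (3:ℤ)^(a+1) ∣ ∑ m ∈ range (s+1), ((s+2).choose (m+1+1) : ℤ) * ((u ^ (m+1+1)) x₀ i₁) := by
      refine Finset.dvd_sum fun m _ => ?_
      have h1 : (3:ℤ)^(a*(m+1+1)) ∣ (u ^ (m+1+1)) x₀ i₁ := hpow (m+1+1) x₀ i₁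
      have h2 : (3:ℤ)^(a+1) ∣ (3:ℤ)^(a*(m+1+1)) := pow_dvd_pow 3 (by nlinarith)
      exact ((h2.trans h1).mul_left _)
    have hdu : (3:ℤ)^(a+1) ∣ ((s+2:ℕ):ℤ) * (u x₀ i₁) := by
      have heq : ((s+2:ℕ):ℤ) * (u x₀ i₁)
          = -∑ m ∈ range (s+1), ((s+2).choose (m+1+1) : ℤ) * ((u ^ (m+1+1)) x₀ i₁) := by
        linarith
      rw [heq]
      exact hsum.neg_right
    rw [ht] at hdu
    have h5 : ((s+2:ℕ):ℤ) * ((3:ℤ)^a * t) = (3:ℤ)^a * (((s+2:ℕ):ℤ) * t) := by ring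
    have h6 : ((3:ℤ)^(a+1)) = (3:ℤ)^a * 3 := by ring
    rw [h5, h6] at hdu
    have h7 : (3:ℤ) ∣ ((s+2:ℕ):ℤ) * t :=
      (mul_dvd_mul_iff_left (pow_ne_zero a (by norm_num : (3:ℤ) ≠ 0))).mp hdu
    rcases (Int.prime_three.dvd_mul.mp h7) with h8 | h8
    · have h9 : (3:ℕ) ∣ s + 2 := by exact_mod_cast h8
      exact hq3 ((Nat.prime_dvd_prime_iff_eq Nat.prime_three hq).mp h9).symm
    · exact hx3t h8

end BFSAux2

namespace BFSAux3
open BFSAux BFSAux2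
variable {ι : Type*} [Fintype ι] [DecidableEq ι]

lemma cong_pow (f : AddMonoid.End (ι →₀ ℤ)) (hmod : ∀ x i, (3:ℤ) ∣ (f x - x) i) :
    ∀ (m : ℕ) (x : ι →₀ ℤ) (i : ι), (3:ℤ) ∣ ((f^m) x - x) i := by
  intro m
  induction m with
  | zero => intro x i; simp [AddMonoid.End.one_apply]
  | succ m ih =>
      intro x i
      have h1 : (f^(m+1)) x = (f^m) (f x) := by rw [pow_succ]; rfl
      have h2 : (f^(m+1)) x - x = ((f^m) (f x) - f x) + (f x - x) := by rw [h1]; abel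
      rw [h2]
      rw [Finsupp.add_apply]
      exact dvd_add (ih (f x) i) (hmod x i)

lemma mink (f : AddMonoid.End (ι →₀ ℤ)) {k : ℕ} (hk : k ≠ 0) (hfk : f ^ k = 1)
    (hmod : ∀ x i, (3:ℤ) ∣ (f x - x) i) : f = 1 := by
  by_contra hne
  have hfin : IsOfFinOrder f := isOfFinOrder_iff_pow_eq_one.mpr ⟨k, Nat.pos_of_ne_zero hk, hfk⟩
  set o : ℕ := orderOf f with ho_def
  have ho0 : 0 < o := hfin.orderOf_pos
  have ho1 : o ≠ 1 := fun h => hne (orderOf_eq_one_iff.mp h)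
  set p : ℕ := o.minFac with hp_def
  have hp : p.Prime := Nat.minFac_prime ho1
  have hdvd : p ∣ o := Nat.minFac_dvd o
  set g : AddMonoid.End (ι →₀ ℤ) := f ^ (o / p) with hg_def
  have hgq : g ^ p = 1 := by
    rw [hg_def, ← pow_mul, Nat.div_mul_cancel hdvd, ho_def, pow_orderOf_eq_one]
  have hgmod : ∀ x i, (3:ℤ) ∣ (g x - x) i := cong_pow f hmod (o / p)
  have hg1 : g = 1 := mink_prime g hp hgq hgmod
  have : o ∣ o / p := orderOf_dvd_of_pow_eq_one (by rw [← hg_def, hg1])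
  have hlt : o / p < o := Nat.div_lt_self ho0 hp.one_lt
  have hop : 0 < o / p := Nat.div_pos (Nat.le_of_dvd ho0 hdvd) hp.pos
  have := Nat.le_of_dvd hop this
  omega

end BFSAux3

namespace BFSAux4
open BFSAux BFSAux2 BFSAux3

variable {ι : Type*} [Fintype ι] [DecidableEq ι]

/-- reduction mod 3 -/
noncomputable def qmap : (ι →₀ ℤ) →+ (ι → ZMod 3) :=
  AddMonoidHom.mk' (fun x i => ((x i : ℤ) : ZMod 3)) (by
    intro x y; funext i; simp)

noncomputable def liftmap (v : ι → ZMod 3) : ι →₀ ℤ :=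
  Finsupp.onFinset Finset.univ (fun i => ((v i).val : ℤ)) (by simp)

lemma qmap_lift (v : ι → ZMod 3) : qmap (liftmap v) = v := by
  funext i
  show (((liftmap v) i : ℤ) : ZMod 3) = v i
  have : (liftmap v) i = ((v i).val : ℤ) := Finsupp.onFinset_apply
  rw [this]
  push_cast
  simp [ZMod.natCast_val, ZMod.cast_id']

lemma qmap_key (f : AddMonoid.End (ι →₀ ℤ)) (x y : ι →₀ ℤ) (h : qmap x = qmap y) :
    qmap (f x) = qmap (f y) := by
  have hd : ∀ i, (3:ℤ) ∣ (x - y) i := by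
    intro i
    have : ((x - y) i : ZMod 3) = 0 := by
      have h1 := congrFun (congrArg (fun v => v) h) i
      have h2 : qmap (x - y) = 0 := by rw [map_sub, h, sub_self]
      have := congrFun h2 i
      simpa [qmap] using this
    exact (ZMod.intCast_zmod_eq_zero_iff_dvd _ 3).mp this
  obtain ⟨w, hw⟩ := smul_extract (x - y) 3 hd
  have h3 : qmap (f x) - qmap (f y) = qmap (f (x - y)) := by
    rw [map_sub, map_sub]
  have h4 : qmap (f (x - y)) = 0 := by
    rw [hw, map_zsmul, map_zsmul]
    funext i
    show (3:ℤ) • (qmap (f w)) i = (0 : ZMod 3)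
    rw [zsmul_eq_mul]
    norm_num
    left
    decide
  have := sub_eq_zero.mp (h3.trans h4)
  exact this

/-- reduction mod 3 as a monoid hom on endomorphisms -/
noncomputable def rmap : AddMonoid.End (ι →₀ ℤ) →* AddMonoid.End (ι → ZMod 3) where
  toFun f := AddMonoidHom.mk' (fun v => qmap (f (liftmap v))) (by
    intro v w
    show qmap (f (liftmap (v + w))) = qmap (f (liftmap v)) + qmap (f (liftmap w))
    have h1 : qmap (f (liftmap (v + w))) = qmap (f (liftmap v + liftmap w)) := by
      apply qmap_key
      rw [qmap_lift, map_add, qmap_lift, qmap_lift]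
    rw [h1, map_add, map_add])
  map_one' := by
    apply AddMonoidHom.ext
    intro v
    show qmap ((1 : AddMonoid.End (ι →₀ ℤ)) (liftmap v)) = v
    rw [AddMonoid.End.one_apply, qmap_lift]
  map_mul' f g := by
    apply AddMonoidHom.ext
    intro v
    show qmap (f (g (liftmap v))) = qmap (f (liftmap (qmap (g (liftmap v)))))
    apply qmap_key
    rw [qmap_lift]

lemma rmap_ker {f : AddMonoid.End (ι →₀ ℤ)} (h : rmap f = 1) :
    ∀ x i, (3:ℤ) ∣ (f x - x) i := by
  intro x i
  have h1 : qmap (f (liftmap (qmap x))) = qmap x := by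
    have := congrArg (fun g : AddMonoid.End (ι → ZMod 3) => g (qmap x)) h
    exact this
  have h2 : qmap (f x) = qmap (f (liftmap (qmap x))) := by
    apply qmap_key
    rw [qmap_lift]
  have h3 : qmap (f x - x) = 0 := by
    rw [map_sub, h2, h1, sub_self]
  have h4 : ((f x - x) i : ZMod 3) = 0 := by
    have := congrFun h3 i
    simpa [qmap] using this
  exact (ZMod.intCast_zmod_eq_zero_iff_dvd _ 3).mp h4

end BFSAux4

instance addAutGroupAux {M : Type*} [Add M] : Group (AddAut M) :=
  inferInstanceAs (Group (Multiplicative (AddAut M)))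

namespace BFSAux5
open BFSAux BFSAux2 BFSAux3 BFSAux4

variable {ι : Type*} [Fintype ι] [DecidableEq ι]
variable {F : Type*} [AddCommGroup F] [Finite F]

lemma tors (α : AddAut ((ι →₀ ℤ) × F)) (f : F) : (α (0, f)).1 = 0 := by
  have hm : 0 < Nat.card F := Nat.card_pos
  have h1 : Nat.card F • ((0, f) : (ι →₀ ℤ) × F) = 0 := by
    rw [Prod.smul_mk, smul_zero]
    rw [card_nsmul_eq_zero']
    rfl
  have h2 : Nat.card F • α (0, f) = 0 := by rw [← map_nsmul, h1, map_zero]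
  have h3 : Nat.card F • (α (0, f)).1 = 0 := by
    have := congrArg Prod.fst h2
    simpa using this
  ext i
  have h4 := congrArg (fun y : ι →₀ ℤ => y i) h3
  simp only [Finsupp.smul_apply, smul_eq_mul, Finsupp.coe_zero, Pi.zero_apply] at h4 ⊢
  have h5 : (Nat.card F : ℤ) * ((α (0, f)).1 i) = 0 := by
    rw [← h4]
    simp [nsmul_eq_mul]
  rcases mul_eq_zero.mp h5 with h | h
  · exact absurd h (by exact_mod_cast hm.ne')
  · exact h

/-- the action on the free part -/
noncomputable def eOne : AddAut ((ι →₀ ℤ) × F) →* AddMonoid.End (ι →₀ ℤ) where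
  toFun α := AddMonoidHom.mk' (fun x => (α (x, 0)).1) (by
    intro x y
    show (α ((x + y : ι →₀ ℤ), (0:F))).1 = (α (x, 0)).1 + (α (y, 0)).1
    have : ((x + y : ι →₀ ℤ), (0:F)) = (x, 0) + (y, 0) := by simp
    rw [this, map_add]
    rfl)
  map_one' := by apply AddMonoidHom.ext; intro x; rfl
  map_mul' α β := by
    apply AddMonoidHom.ext
    intro x
    show ((α * β) (x, 0)).1 = (α ((β (x, 0)).1, 0)).1
    have h1 : (α * β) (x, 0) = α (β (x, 0)) := rfl
    have h2 : (β (x, 0)) = ((β (x, 0)).1, (0:F)) + ((0 : ι →₀ ℤ), (β (x, 0)).2) := by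
      ext <;> simp
    rw [h1, h2, map_add]
    have h3 : (α ((0 : ι →₀ ℤ), (β (x, 0)).2)).1 = 0 := tors α _
    simp [h3]

/-- the action on the torsion part -/
noncomputable def eTwo : AddAut ((ι →₀ ℤ) × F) →* AddMonoid.End F where
  toFun α := AddMonoidHom.mk' (fun f => (α (0, f)).2) (by
    intro f g
    show (α ((0 : ι →₀ ℤ), f + g)).2 = (α (0, f)).2 + (α (0, g)).2
    have : ((0 : ι →₀ ℤ), f + g) = (0, f) + (0, g) := by simp
    rw [this, map_add]
    rfl)
  map_one' := by apply AddMonoidHom.ext; intro f; rfl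
  map_mul' α β := by
    apply AddMonoidHom.ext
    intro f
    show ((α * β) (0, f)).2 = (α (0, (β (0, f)).2)).2
    have h1 : (α * β) (0, f) = α (β (0, f)) := rfl
    have h2 : (β (0, f)) = ((β (0, f)).1, (0:F)) + ((0 : ι →₀ ℤ), (β (0, f)).2) := by
      ext <;> simp
    have h3 : (β (0, f)).1 = 0 := tors β f
    rw [h1, h2, map_add]
    rw [h3]
    have h4 : (α ((0 : ι →₀ ℤ), (0:F))).2 = 0 := by
      have : ((0 : ι →₀ ℤ), (0:F)) = (0 : (ι →₀ ℤ) × F) := rfl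
      rw [this, map_zero]
      rfl
    simp [h4]

lemma finite_homZF : Finite ((ι →₀ ℤ) →+ F) := by
  apply Finite.of_injective (fun φ : (ι →₀ ℤ) →+ F => (fun j => φ (Finsupp.single j 1) : ι → F))
  intro φ ψ h
  have h1 : ∀ (χ : (ι →₀ ℤ) →+ F) (a : ι) (b : ℤ),
      χ (Finsupp.single a b) = b • χ (Finsupp.single a 1) := by
    intro χ a b
    rw [show (Finsupp.single a b : ι →₀ ℤ) = b • Finsupp.single a 1 by simp, map_zsmul]
  apply Finsupp.addHom_ext
  intro a b
  rw [h1 φ a b, h1 ψ a b]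
  exact congrArg (b • ·) (congrFun h a)

instance : Finite (AddMonoid.End F) :=
  Finite.of_injective (fun f : AddMonoid.End F => (f : F → F)) DFunLike.coe_injective

instance : Finite (AddMonoid.End (ι → ZMod 3)) :=
  Finite.of_injective (fun f : AddMonoid.End (ι → ZMod 3) => (f : (ι → ZMod 3) → (ι → ZMod 3)))
    DFunLike.coe_injective

end BFSAux5

namespace BFSAux6
open BFSAux BFSAux2 BFSAux3 BFSAux4 BFSAux5

variable {ι : Type*} [Fintype ι] [DecidableEq ι]
variable {F : Type*} [AddCommGroup F] [Finite F]

lemma bdd_aut_prod :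
    ∃ B : ℕ, ∀ Q : Subgroup (AddAut ((ι →₀ ℤ) × F)), Finite Q → Nat.card Q ≤ B := by
  classical
  have hfinhom : Finite ((ι →₀ ℤ) →+ F) := finite_homZF
  refine ⟨Nat.card ((AddMonoid.End F)ˣ × (AddMonoid.End (ι → ZMod 3))ˣ)
    * Nat.card ((ι →₀ ℤ) →+ F), ?_⟩
  intro Q hQ
  set Φ : Q →* (AddMonoid.End F)ˣ × (AddMonoid.End (ι → ZMod 3))ˣ :=
    ((eTwo.comp Q.subtype).toHomUnits).prod
      (((rmap.comp eOne).comp Q.subtype).toHomUnits) with hΦ_def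
  have hcard : Nat.card Q = Nat.card (Q ⧸ Φ.ker) * Nat.card Φ.ker :=
    Subgroup.card_eq_card_quotient_mul_card_subgroup Φ.ker
  have h1 : Nat.card (Q ⧸ Φ.ker)
      ≤ Nat.card ((AddMonoid.End F)ˣ × (AddMonoid.End (ι → ZMod 3))ˣ) := by
    rw [Nat.card_congr (QuotientGroup.quotientKerEquivRange Φ).toEquiv]
    exact Nat.card_le_card_of_injective _ Subtype.val_injective
  -- analyze elements of the kernel
  have hker : ∀ γ : Q, γ ∈ Φ.ker →
      ∀ x f, ((γ : AddAut ((ι →₀ ℤ) × F)) (x, f)) =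
        (x, ((γ : AddAut ((ι →₀ ℤ) × F)) (x, 0)).2 + f) := by
    intro γ hγ x f
    set γ' : AddAut ((ι →₀ ℤ) × F) := (γ : AddAut ((ι →₀ ℤ) × F)) with hγ'_def
    rw [MonoidHom.mem_ker] at hγ
    have hγ1 := congrArg Prod.fst hγ
    have hγ2 := congrArg Prod.snd hγ
    have he2 : eTwo γ' = 1 := by
      have := congrArg Units.val hγ1
      simpa [hΦ_def] using this
    have hr : rmap (eOne γ') = 1 := by
      have := congrArg Units.val hγ2
      simpa [hΦ_def] using this
    have hk : (Nat.card Q) ≠ 0 := Nat.card_pos.ne'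
    have hpow : (eOne γ') ^ (Nat.card Q) = 1 := by
      rw [← map_pow]
      have : γ' ^ (Nat.card Q) = ((γ ^ (Nat.card Q) : Q) : AddAut ((ι →₀ ℤ) × F)) := rfl
      rw [this, pow_card_eq_one']
      exact map_one eOne
    have he1 : eOne γ' = 1 := mink (eOne γ') hk hpow (rmap_ker hr)
    -- determine γ'
    have hxf : ((x : ι →₀ ℤ), f) = (x, (0:F)) + ((0 : ι →₀ ℤ), f) := by simp
    rw [hxf, map_add]
    have hfree : γ' (x, (0:F)) = (x, (γ' (x, 0)).2) := by
      have h5 : (γ' (x, (0:F))).1 = x := by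
        have := DFunLike.congr_fun he1 x
        exact this
      exact Prod.ext h5 rfl
    have htor : γ' ((0 : ι →₀ ℤ), f) = (0, f) := by
      have h6 : (γ' ((0 : ι →₀ ℤ), f)).2 = f := by
        have := DFunLike.congr_fun he2 f
        exact this
      exact Prod.ext (tors γ' f) h6
    rw [hfree, htor]
    ext <;> simp
  have h2 : Nat.card Φ.ker ≤ Nat.card ((ι →₀ ℤ) →+ F) := by
    apply Nat.card_le_card_of_injective
      (fun γ : Φ.ker => AddMonoidHom.mk'
        (fun x : ι →₀ ℤ => (((γ : Q) : AddAut ((ι →₀ ℤ) × F)) (x, 0)).2)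
        (by
          intro x y
          show ((((γ : Q) : AddAut ((ι →₀ ℤ) × F)) ((x + y : ι →₀ ℤ), (0:F)))).2 = _
          have hxy : ((x + y : ι →₀ ℤ), (0:F)) = (x, 0) + (y, 0) := by simp
          rw [hxy, map_add]
          rfl))
    intro γ₁ γ₂ hθ
    have hθ' : ∀ x : ι →₀ ℤ,
        (((γ₁ : Q) : AddAut ((ι →₀ ℤ) × F)) (x, 0)).2
          = (((γ₂ : Q) : AddAut ((ι →₀ ℤ) × F)) (x, 0)).2 := by
      intro x
      exact DFunLike.congr_fun hθ x
    apply Subtype.ext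
    apply Subtype.ext
    apply DFunLike.ext
    rintro ⟨x, f⟩
    rw [hker _ γ₁.2 x f, hker _ γ₂.2 x f, hθ' x]
  rw [hcard]
  exact Nat.mul_le_mul h1 h2

end BFSAux6

namespace BFSAux7

lemma bdd_of_hom {G G' : Type*} [Group G] [Group G'] (φ : G →* G') (hker : Finite φ.ker)
    (h : ∃ B', ∀ H' : Subgroup G', Finite H' → Nat.card H' ≤ B') :
    ∃ B : ℕ, ∀ H : Subgroup G, Finite H → Nat.card H ≤ B := by
  obtain ⟨B', hB'⟩ := h
  refine ⟨B' * Nat.card φ.ker, ?_⟩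
  intro H hH
  set ψ : H →* G' := φ.comp H.subtype with hψ_def
  have hcard : Nat.card H = Nat.card (H ⧸ ψ.ker) * Nat.card ψ.ker :=
    Subgroup.card_eq_card_quotient_mul_card_subgroup ψ.ker
  have hrange : Finite ψ.range :=
    Finite.of_surjective ψ.rangeRestrict ψ.rangeRestrict_surjective
  have h1 : Nat.card (H ⧸ ψ.ker) ≤ B' := by
    rw [Nat.card_congr (QuotientGroup.quotientKerEquivRange ψ).toEquiv]
    exact hB' ψ.range hrange
  have h2 : Nat.card ψ.ker ≤ Nat.card φ.ker := by
    apply Nat.card_le_card_of_injective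
      (fun x : ψ.ker => (⟨H.subtype x.1, by
        have := x.2
        rw [MonoidHom.mem_ker] at this ⊢
        exact this⟩ : φ.ker))
    intro x y hxy
    have h3' := congrArg (fun z : φ.ker => (z : G)) hxy
    have h3 : H.subtype x.1 = H.subtype y.1 := h3'
    exact Subtype.ext (Subgroup.subtype_injective H h3)
  rw [hcard]
  exact Nat.mul_le_mul h1 h2

lemma bdd_of_equiv {G G' : Type*} [Group G] [Group G'] (e : G ≃* G')
    (h : ∃ B', ∀ H' : Subgroup G', Finite H' → Nat.card H' ≤ B') :
    ∃ B : ℕ, ∀ H : Subgroup G, Finite H → Nat.card H ≤ B := by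
  apply bdd_of_hom e.toMonoidHom ?_ h
  have hbot : e.toMonoidHom.ker = ⊥ := (MonoidHom.ker_eq_bot_iff _).mpr e.injective
  rw [hbot]
  infer_instance

end BFSAux7

theorem bounded_finite_subgroups_of_action_on_fg_abelian'
    {G N : Type*} [Group G] [AddCommGroup N] [AddGroup.FG N]
    (ρ : G →* AddAut N) (hker : Finite ρ.ker) :
    ∃ B : ℕ, ∀ H : Subgroup G, Finite H → Nat.card H ≤ B := by
  obtain ⟨n, κ, fκ, p, hp, e, ⟨σ⟩⟩ := AddCommGroup.equiv_free_prod_directSum_zmod N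
  haveI : ∀ i, NeZero (p i ^ e i) := fun i => ⟨pow_ne_zero _ (hp i).pos.ne'⟩
  haveI : Finite (DirectSum κ fun i => ZMod (p i ^ e i)) := by
    apply Finite.of_injective
      (fun x : DirectSum κ fun i => ZMod (p i ^ e i) => (x : ∀ i, ZMod (p i ^ e i)))
    exact DFunLike.coe_injective
  apply BFSAux7.bdd_of_hom ρ hker
  apply BFSAux7.bdd_of_equiv (AddAut.congr σ).toMultiplicative
  exact BFSAux6.bdd_aut_prod

/-- If a group `G` acts on a finitely generated abelian group `N` with finite kernel of
the action map `G → Aut(N)`, then there is a uniform bound on the orders of finite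
subgroups of `G`. -/
theorem bounded_finite_subgroups_of_action_on_fg_abelian
    {G N : Type*} [Group G] [AddCommGroup N] [AddGroup.FG N]
    (ρ : G →* Multiplicative (AddAut N)) (hker : Finite ρ.ker) :
    ∃ B : ℕ, ∀ H : Subgroup G, Finite H → Nat.card H ≤ B :=
  bounded_finite_subgroups_of_action_on_fg_abelian' ρ hker
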